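/- arXiv:2511.03125 — 2 statements merged into one kernel-verified Lean document; each statement's English description precedes it below -/
import Mathlib

section
/- Let γ ≥ 0 with 2γ < N, and let x ∈ D. If ∑_{i=1}^N log(1 + σ_0^{-2} σ_{g,i−1}²(x)) ≤ 2γ, then the posterior variance after all N source observations satisfies σ_{g,N}²(x) ≤ 2γ σ_0² / (N − 2γ). -/
open Matrix

/-- The `n × n` kernel matrix `K_n = [k_g(x_i, x_j)]` built from the first `n`
points of the sequence `xs` (zero-indexed: `xs 0 = x_1`). -/
noncomputable def kerMat {D : Type*} (k_g : D → D → ℝ) (xs : ℕ → D) (n : ℕ) :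
    Matrix (Fin n) (Fin n) ℝ :=
  Matrix.of fun i j => k_g (xs i) (xs j)

/-- The kernel vector `k_n(x) = [k_g(x_i, x)]_{i=1}^n`. -/
noncomputable def kerVec {D : Type*} (k_g : D → D → ℝ) (xs : ℕ → D) (n : ℕ) (y : D) :
    Fin n → ℝ :=
  fun i => k_g (xs i) y

/-- The posterior variance
`σ_n²(x) = k_g(x,x) − k_n(x)ᵀ (K_n + σ² I_n)⁻¹ k_n(x)`;
for `n = 0` this is `k_g(x,x)`. -/
noncomputable def postVar {D : Type*} (k_g : D → D → ℝ) (xs : ℕ → D) (σ0sq : ℝ)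
    (n : ℕ) (y : D) : ℝ :=
  k_g y y -
    kerVec k_g xs n y ⬝ᵥ
      ((kerMat k_g xs n + σ0sq • (1 : Matrix (Fin n) (Fin n) ℝ))⁻¹ *ᵥ kerVec k_g xs n y)

/-! The posterior variance `σ_n²(x) = k(x,x) − kᵀ (K + σ₀² I)⁻¹ k` is antitone in `n`: for
positive definite `A`, `kᵀ A⁻¹ k = max_w (2 wᵀk − wᵀ A w)`, and `K_m + σ₀² I` is a principal
submatrix of `K_n + σ₀² I` for `m ≤ n`, so the maximiser for `m`, padded by zeros, competes for `n`.
Hence, with `u = σ_N²/σ₀² > 0`, each summand is at least `log (1 + u) ≥ u / (1 + u)`, so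
`N u / (1 + u) ≤ 2γ`, i.e. `u (N − 2γ) ≤ 2γ`. If `σ_N² ≤ 0` the bound is trivial. -/

namespace Matrix

variable {ι κ : Type*} [Fintype ι] [Fintype κ]

theorem PosDef.two_mul_dotProduct_sub_le_dotProduct_inv_mulVec [DecidableEq κ]
    {A : Matrix κ κ ℝ} (hA : A.PosDef) (k w : κ → ℝ) :
    2 * (w ⬝ᵥ k) - w ⬝ᵥ (A *ᵥ w) ≤ k ⬝ᵥ (A⁻¹ *ᵥ k) := by
  set v := A⁻¹ *ᵥ k
  have hAv : A *ᵥ v = k := by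
    rw [mulVec_mulVec, mul_nonsing_inv _ hA.det_pos.ne'.isUnit, one_mulVec]
  have hsymm : v ⬝ᵥ (A *ᵥ w) = w ⬝ᵥ k := by
    rw [dotProduct_mulVec, ← mulVec_transpose, ← conjTranspose_eq_transpose_of_trivial,
      hA.isHermitian, hAv, dotProduct_comm]
  have hnonneg := hA.posSemidef.dotProduct_mulVec_nonneg (w - v)
  simp only [star_trivial, mulVec_sub, hAv, dotProduct_sub, sub_dotProduct] at hnonneg
  rw [hsymm, dotProduct_comm v k] at hnonneg
  linarith

theorem extend_zero_dotProduct {R : Type*} [NonUnitalNonAssocSemiring R] {e : ι → κ}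
    (he : Function.Injective e) (w : ι → R) (v : κ → R) :
    Function.extend e w 0 ⬝ᵥ v = w ⬝ᵥ (v ∘ e) := by
  refine (Fintype.sum_of_injective e he _ _ (fun j hj => ?_) (fun i => ?_)).symm
  · rw [Function.extend_apply' _ _ _ (by simpa using hj), Pi.zero_apply, zero_mul]
  · rw [he.extend_apply, Function.comp_apply]

theorem PosDef.dotProduct_submatrix_inv_mulVec_le [DecidableEq ι] [DecidableEq κ]
    {A : Matrix κ κ ℝ} (hA : A.PosDef) {e : ι → κ} (he : Function.Injective e) (k : κ → ℝ) :
    (k ∘ e) ⬝ᵥ ((A.submatrix e e)⁻¹ *ᵥ (k ∘ e)) ≤ k ⬝ᵥ (A⁻¹ *ᵥ k) := by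
  set B := A.submatrix e e
  set w := B⁻¹ *ᵥ (k ∘ e)
  have hBw : B *ᵥ w = k ∘ e := by
    rw [mulVec_mulVec, mul_nonsing_inv _ (hA.submatrix he).det_pos.ne'.isUnit, one_mulVec]
  have hAw : (A *ᵥ Function.extend e w 0) ∘ e = B *ᵥ w := by
    ext i
    rw [Function.comp_apply, mulVec, dotProduct_comm, extend_zero_dotProduct he]
    exact dotProduct_comm _ _
  have hpadded := hA.two_mul_dotProduct_sub_le_dotProduct_inv_mulVec k (Function.extend e w 0)
  rw [extend_zero_dotProduct he, extend_zero_dotProduct he, hAw, hBw] at hpadded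
  rw [dotProduct_comm]
  linarith

end Matrix

section PosteriorVariance

variable {D : Type*} (k_g : D → D → ℝ) (x0 : ℕ → D) {σ0sq : ℝ}

theorem kerMat_add_smul_one_posDef
    (hpsd : ∀ (n : ℕ) (z : Fin n → D), (Matrix.of fun i j => k_g (z i) (z j)).PosSemidef)
    (hσ0sq : 0 < σ0sq) (n : ℕ) :
    (kerMat k_g x0 n + σ0sq • (1 : Matrix (Fin n) (Fin n) ℝ)).PosDef :=
  PosDef.posSemidef_add (hpsd n fun i => x0 i) (PosDef.one.smul hσ0sq)

theorem kerMat_add_smul_one_submatrix_castLE {m n : ℕ} (h : m ≤ n) :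
    (kerMat k_g x0 n + σ0sq • (1 : Matrix (Fin n) (Fin n) ℝ)).submatrix
      (Fin.castLE h) (Fin.castLE h) = kerMat k_g x0 m + σ0sq • 1 :=
  congrArg (kerMat k_g x0 m + σ0sq • ·) (submatrix_one _ (Fin.castLE_injective h))

theorem postVar_antitone
    (hpsd : ∀ (n : ℕ) (z : Fin n → D), (Matrix.of fun i j => k_g (z i) (z j)).PosSemidef)
    (hσ0sq : 0 < σ0sq) (x : D) : Antitone fun n => postVar k_g x0 σ0sq n x := by
  intro m n h
  have hquad :=
    (kerMat_add_smul_one_posDef k_g x0 hpsd hσ0sq n).dotProduct_submatrix_inv_mulVec_le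
      (Fin.castLE_injective h) (kerVec k_g x0 n x)
  rw [kerMat_add_smul_one_submatrix_castLE k_g x0 h] at hquad
  exact sub_le_sub_left hquad _

end PosteriorVariance

theorem le_div_sub_of_mul_log_one_add_le {u b N : ℝ} (hu : 0 < u) (hN : 0 ≤ N) (hbN : b < N)
    (h : N * Real.log (1 + u) ≤ b) : u ≤ b / (N - b) := by
  have hlog : u / (1 + u) ≤ Real.log (1 + u) :=
    calc u / (1 + u) = 1 - (1 + u)⁻¹ := by field_simp; ring
      _ ≤ Real.log (1 + u) := Real.one_sub_inv_le_log_of_pos (by positivity)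
  have hlin : N * u ≤ b * (1 + u) := by
    rw [← div_le_iff₀ (by positivity), mul_div_assoc]
    exact (mul_le_mul_of_nonneg_left hlog hN).trans h
  rw [le_div_iff₀ (by linarith)]
  linarith

theorem source_posterior_variance_bound_general {D : Type*}
    (k_g : D → D → ℝ)
    (hpsd : ∀ (n : ℕ) (z : Fin n → D),
      (Matrix.of fun i j => k_g (z i) (z j)).PosSemidef)
    (σ0sq : ℝ) (hσ0sq : 0 < σ0sq)
    (x0 : ℕ → D) (N : ℕ)
    (γ : ℝ) (hγ : 0 ≤ γ) (hγN : 2 * γ < N)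
    (x : D)
    (hsum : ∑ i : Fin N, Real.log (1 + σ0sq⁻¹ * postVar k_g x0 σ0sq i x) ≤ 2 * γ) :
    postVar k_g x0 σ0sq N x ≤ 2 * γ * σ0sq / (N - 2 * γ) := by
  set s := postVar k_g x0 σ0sq N x
  rcases le_or_gt s 0 with hs | hs
  · exact hs.trans (div_nonneg (by positivity) (by linarith))
  have hu : 0 < σ0sq⁻¹ * s := by positivity
  have hlog : N * Real.log (1 + σ0sq⁻¹ * s) ≤ 2 * γ := by
    refine le_trans ?_ hsum
    rw [← nsmul_eq_mul, ← Fin.sum_const]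
    refine Finset.sum_le_sum fun i _ => Real.log_le_log (by positivity) ?_
    gcongr
    exact postVar_antitone k_g x0 hpsd hσ0sq x i.isLt.le
  calc s = σ0sq * (σ0sq⁻¹ * s) := by field_simp
    _ ≤ σ0sq * (2 * γ / (N - 2 * γ)) := by
      gcongr
      exact le_div_sub_of_mul_log_one_add_le hu N.cast_nonneg hγN hlog
    _ = 2 * γ * σ0sq / (N - 2 * γ) := by ring

/-- If the information-gain-type sum `∑_{i=1}^N log(1 + σ_0^{-2} σ_{g,i−1}²(x))`
is at most `2γ` with `2γ < N`, then
`σ_{g,N}²(x) ≤ 2γ σ_0² / (N − 2γ)`. -/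
theorem source_posterior_variance_bound {D : Type*} [Nonempty D]
    (k_g : D → D → ℝ)
    (hsymm : ∀ a b : D, k_g a b = k_g b a)
    (hpsd : ∀ (n : ℕ) (z : Fin n → D),
      (Matrix.of fun i j => k_g (z i) (z j)).PosSemidef)
    (σ0sq : ℝ) (hσ0sq : 0 < σ0sq)
    (x0 : ℕ → D) (N : ℕ)
    (γ : ℝ) (hγ : 0 ≤ γ) (hγN : 2 * γ < N)
    (x : D)
    (hsum : ∑ i : Fin N, Real.log (1 + σ0sq⁻¹ * postVar k_g x0 σ0sq i x) ≤ 2 * γ) :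
    postVar k_g x0 σ0sq N x ≤ 2 * γ * σ0sq / (N - 2 * γ) :=
  source_posterior_variance_bound_general k_g hpsd σ0sq hσ0sq x0 N γ hγ hγN x hsum
end

section
/- Let γ ≥ 0 with 2γ < N, and let x_1, …, x_T ∈ D. If for every t ∈ {1, …, T} the bound ∑_{i=1}^N log(1 + σ_0^{-2} σ_{g,i−1}²(x_t)) ≤ 2γ holds, then the total posterior variance over the T points satisfies ∑_{t=1}^T σ_{g,N}²(x_t) ≤ 2 T γ σ_0² / (N − 2γ). -/
open Matrix

/-! The posterior variance `σ²_{g,n}(y)` is the least mean squared error of a linear estimate of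
`f y` from the first `n` noisy observations, and the error of each estimate is a positive
semidefinite quadratic form. Hence `σ²_{g,n}(y)` is nonnegative and antitone in `n`: an estimate
from `n` observations is one from `n + 1` observations with a zero weight. So every term of the
hypothesis is at least `log (1 + u)` with `u = σ_0⁻² σ²_{g,N}(x_t)`, and
`u / (1 + u) ≤ log (1 + u)` turns `N log (1 + u) ≤ 2γ` into `u ≤ 2γ / (N - 2γ)`.
Summing over `t` gives the bound. -/

namespace Matrix

variable {ι : Type*} [Fintype ι] [DecidableEq ι]

lemma PosDef.two_mul_dotProduct_sub_le {M : Matrix ι ι ℝ} (hM : M.PosDef) (k w : ι → ℝ) :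
    2 * (w ⬝ᵥ k) - w ⬝ᵥ (M *ᵥ w) ≤ k ⬝ᵥ (M⁻¹ *ᵥ k) := by
  set w₀ := M⁻¹ *ᵥ k
  have hMw₀ : M *ᵥ w₀ = k := by
    rw [mulVec_mulVec, mul_nonsing_inv _ ((isUnit_iff_isUnit_det _).1 hM.isUnit), one_mulVec]
  have hsymm : w₀ ⬝ᵥ (M *ᵥ w) = w ⬝ᵥ k := by
    rw [dotProduct_mulVec, ← mulVec_transpose, (isHermitian_iff_isSymm.mp hM.isHermitian).eq,
      hMw₀, dotProduct_comm]
  -- completing the square around the minimiser `w₀`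
  have h := hM.posSemidef.dotProduct_mulVec_nonneg (w - w₀)
  simp only [star_trivial, mulVec_sub, dotProduct_sub, sub_dotProduct, hMw₀, hsymm] at h
  rw [dotProduct_comm k w₀]
  linarith

end Matrix

/-- The prior mean squared error of the linear estimate `∑ i, w i * (f (xs i) + εᵢ)` of `f y`,
for `f` a centred process with covariance `k_g` and independent `N(0, σ0sq)` noise `εᵢ`. -/
noncomputable def predMSE {D : Type*} (k_g : D → D → ℝ) (xs : ℕ → D) (σ0sq : ℝ) (n : ℕ)
    (y : D) (w : Fin n → ℝ) : ℝ :=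
  k_g y y - 2 * (w ⬝ᵥ kerVec k_g xs n y) +
    w ⬝ᵥ ((kerMat k_g xs n + σ0sq • (1 : Matrix (Fin n) (Fin n) ℝ)) *ᵥ w)

section Kernel

variable {D : Type*} {k_g : D → D → ℝ} (xs : ℕ → D) {σ0sq : ℝ}

lemma predMSE_succ_snoc_zero (n : ℕ) (y : D) (w : Fin n → ℝ) :
    predMSE k_g xs σ0sq (n + 1) y (Fin.snoc w 0) = predMSE k_g xs σ0sq n y w := by
  simp [predMSE, dotProduct, mulVec, kerVec, kerMat, Fin.sum_univ_castSucc, Matrix.one_apply,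
    Fin.castSucc_inj]

variable (hpsd : ∀ (n : ℕ) (z : Fin n → D), (Matrix.of fun i j => k_g (z i) (z j)).PosSemidef)
include hpsd

lemma predMSE_nonneg (hσ : 0 ≤ σ0sq) (n : ℕ) (y : D) (w : Fin n → ℝ) :
    0 ≤ predMSE k_g xs σ0sq n y w := by
  set z : Fin (n + 1) → D := Fin.cons y fun i => xs i
  set v : Fin (n + 1) → ℝ := Fin.cons 1 (-w)
  have hsymm (i : Fin n) : k_g y (xs i) = k_g (xs i) y := by
    simpa [z] using ((hpsd _ z).isHermitian.apply 0 i.succ).symm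
  have hgram : v ⬝ᵥ ((Matrix.of fun i j => k_g (z i) (z j)) *ᵥ v) =
      k_g y y - 2 * (w ⬝ᵥ kerVec k_g xs n y) + w ⬝ᵥ (kerMat k_g xs n *ᵥ w) := by
    simp only [z, v, dotProduct, mulVec, of_apply, Fin.sum_univ_succ, Fin.cons_zero,
      Fin.cons_succ, kerVec, kerMat, hsymm, Pi.neg_apply, Finset.mul_sum, mul_add,
      Finset.sum_add_distrib, neg_mul, mul_neg, Finset.sum_neg_distrib, one_mul, mul_one,
      mul_comm (k_g (xs _) y), two_mul]
    ring
  have hquad := (hpsd _ z).dotProduct_mulVec_nonneg v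
  have hww : 0 ≤ w ⬝ᵥ w := dotProduct_self_star_nonneg w
  rw [star_trivial, hgram] at hquad
  have : predMSE k_g xs σ0sq n y w =
      k_g y y - 2 * (w ⬝ᵥ kerVec k_g xs n y) + w ⬝ᵥ (kerMat k_g xs n *ᵥ w) +
        σ0sq * (w ⬝ᵥ w) := by
    simp only [predMSE, add_mulVec, dotProduct_add, smul_mulVec, one_mulVec, dotProduct_smul,
      smul_eq_mul]
    ring
  rw [this]
  positivity

variable (hσ : 0 < σ0sq)
include hσ

lemma kerMat_add_smul_one_posDef_s8 (n : ℕ) :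
    (kerMat k_g xs n + σ0sq • (1 : Matrix (Fin n) (Fin n) ℝ)).PosDef :=
  PosDef.posSemidef_add (hpsd n fun i => xs i) (PosDef.one.smul hσ)

lemma postVar_le_predMSE (n : ℕ) (y : D) (w : Fin n → ℝ) :
    postVar k_g xs σ0sq n y ≤ predMSE k_g xs σ0sq n y w := by
  have := (kerMat_add_smul_one_posDef_s8 xs hpsd hσ n).two_mul_dotProduct_sub_le
    (kerVec k_g xs n y) w
  rw [postVar, predMSE]
  linarith

lemma predMSE_inv_mulVec (n : ℕ) (y : D) :
    predMSE k_g xs σ0sq n y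
      ((kerMat k_g xs n + σ0sq • (1 : Matrix (Fin n) (Fin n) ℝ))⁻¹ *ᵥ kerVec k_g xs n y) =
      postVar k_g xs σ0sq n y := by
  have hM := (kerMat_add_smul_one_posDef_s8 xs hpsd hσ n).isUnit
  rw [predMSE, postVar, mulVec_mulVec, mul_nonsing_inv _ ((isUnit_iff_isUnit_det _).1 hM),
    one_mulVec, dotProduct_comm _ (kerVec k_g xs n y)]
  ring

lemma postVar_nonneg (n : ℕ) (y : D) : 0 ≤ postVar k_g xs σ0sq n y :=
  predMSE_inv_mulVec xs hpsd hσ n y ▸ predMSE_nonneg xs hpsd hσ.le n y _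

lemma postVar_antitone_s8 (y : D) : Antitone fun n => postVar k_g xs σ0sq n y :=
  antitone_nat_of_succ_le fun n => by
    rw [← predMSE_inv_mulVec xs hpsd hσ n y, ← predMSE_succ_snoc_zero]
    exact postVar_le_predMSE xs hpsd hσ _ y _

end Kernel

lemma le_div_sub_of_mul_log_one_add_le_s8 {u c n : ℝ} (hu : -1 < u) (hn : 0 ≤ n) (hcn : c < n)
    (h : n * Real.log (1 + u) ≤ c) : u ≤ c / (n - c) := by
  have h1u : 0 < 1 + u := by linarith
  have hlog : u / (1 + u) ≤ Real.log (1 + u) := by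
    have := Real.one_sub_inv_le_log_of_pos h1u
    rwa [show 1 - (1 + u)⁻¹ = u / (1 + u) by field_simp; ring] at this
  have hnu : n * u ≤ c * (1 + u) := by
    have := (mul_le_mul_of_nonneg_left hlog hn).trans h
    rwa [mul_div_assoc', div_le_iff₀ h1u] at this
  rw [le_div_iff₀ (sub_pos.2 hcn)]
  linarith

lemma postVar_le_of_sum_log_le {D : Type*} {k_g : D → D → ℝ} (xs : ℕ → D) {σ0sq : ℝ}
    (hpsd : ∀ (n : ℕ) (z : Fin n → D), (Matrix.of fun i j => k_g (z i) (z j)).PosSemidef)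
    (hσ : 0 < σ0sq) {N : ℕ} {c : ℝ} (hcN : c < N) (y : D)
    (h : ∑ i : Fin N, Real.log (1 + σ0sq⁻¹ * postVar k_g xs σ0sq i y) ≤ c) :
    postVar k_g xs σ0sq N y ≤ c * σ0sq / (N - c) := by
  set u := σ0sq⁻¹ * postVar k_g xs σ0sq N y with hu_def
  have hu : 0 ≤ u := mul_nonneg (inv_nonneg.2 hσ.le) (postVar_nonneg xs hpsd hσ N y)
  have hlog : N * Real.log (1 + u) ≤ c :=
    calc N * Real.log (1 + u) = ∑ _i : Fin N, Real.log (1 + u) := by simp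
      _ ≤ ∑ i : Fin N, Real.log (1 + σ0sq⁻¹ * postVar k_g xs σ0sq i y) := by
        gcongr with i
        exact mul_le_mul_of_nonneg_left (postVar_antitone_s8 xs hpsd hσ y i.is_lt.le) (by positivity)
      _ ≤ c := h
  calc postVar k_g xs σ0sq N y = σ0sq * u := by rw [hu_def, mul_inv_cancel_left₀ hσ.ne']
    _ ≤ σ0sq * (c / (N - c)) := by
      gcongr
      exact le_div_sub_of_mul_log_one_add_le_s8 (by linarith) N.cast_nonneg hcN hlog
    _ = c * σ0sq / (N - c) := by ring

theorem total_source_posterior_variance_bound_general {D : Type*}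
    (k_g : D → D → ℝ)
    (hpsd : ∀ (n : ℕ) (z : Fin n → D),
      (Matrix.of fun i j => k_g (z i) (z j)).PosSemidef)
    (σ0sq : ℝ) (hσ0sq : 0 < σ0sq)
    (x0 : ℕ → D) (N : ℕ)
    (γ : ℝ) (hγN : 2 * γ < N)
    (T : ℕ) (xt : Fin T → D)
    (hsum : ∀ t : Fin T,
      ∑ i : Fin N, Real.log (1 + σ0sq⁻¹ * postVar k_g x0 σ0sq i (xt t)) ≤ 2 * γ) :
    ∑ t : Fin T, postVar k_g x0 σ0sq N (xt t) ≤ 2 * T * γ * σ0sq / (N - 2 * γ) :=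
  calc ∑ t : Fin T, postVar k_g x0 σ0sq N (xt t)
      ≤ ∑ _t : Fin T, 2 * γ * σ0sq / (N - 2 * γ) :=
        Finset.sum_le_sum fun t _ => postVar_le_of_sum_log_le x0 hpsd hσ0sq hγN (xt t) (hsum t)
    _ = 2 * T * γ * σ0sq / (N - 2 * γ) := by
      simp only [Finset.sum_const, Finset.card_univ, Fintype.card_fin, nsmul_eq_mul]
      ring

/-- Total posterior variance bound over `T` points: if for every `t`,
`∑_{i=1}^N log(1 + σ_0^{-2} σ_{g,i−1}²(x_t)) ≤ 2γ` with `2γ < N`, then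
`∑_{t=1}^T σ_{g,N}²(x_t) ≤ 2 T γ σ_0² / (N − 2γ)`. -/
theorem total_source_posterior_variance_bound {D : Type*} [Nonempty D]
    (k_g : D → D → ℝ)
    (hsymm : ∀ a b : D, k_g a b = k_g b a)
    (hpsd : ∀ (n : ℕ) (z : Fin n → D),
      (Matrix.of fun i j => k_g (z i) (z j)).PosSemidef)
    (σ0sq : ℝ) (hσ0sq : 0 < σ0sq)
    (x0 : ℕ → D) (N : ℕ)
    (γ : ℝ) (hγ : 0 ≤ γ) (hγN : 2 * γ < N)
    (T : ℕ) (xt : Fin T → D)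
    (hsum : ∀ t : Fin T,
      ∑ i : Fin N, Real.log (1 + σ0sq⁻¹ * postVar k_g x0 σ0sq i (xt t)) ≤ 2 * γ) :
    ∑ t : Fin T, postVar k_g x0 σ0sq N (xt t) ≤ 2 * T * γ * σ0sq / (N - 2 * γ) :=
  total_source_posterior_variance_bound_general k_g hpsd σ0sq hσ0sq x0 N γ hγN T xt hsum
end
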